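/- The rank of the 3n×n³ coefficient matrix P of the linear system defining n×n×n plane-stochastic tensors equals 3n − 2. -/

import Mathlib

/-!
Since `rank P = rank Pᵀ`, it suffices to show that the left kernel `{x | x ᵥ* P = 0}` is
two-dimensional. The entry of `x ᵥ* P` at `(i, j, k)` is `x (0, k) + x (1, i) + x (2, j)`, and
these sums vanish for all `i, j, k` exactly when `x` is constant on each of the three families
of rows, with the three constants summing to zero.
-/

/-- The `3n × n³` coefficient matrix of the plane-sum constraints defining
`n × n × n` plane-stochastic tensors.  Rows of type `0` encode `∑_{i,j} a_{ijk} = 1`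
(fixed `k`), rows of type `1` encode `∑_{j,k} a_{ijk} = 1` (fixed `i`), and rows of
type `2` encode `∑_{i,k} a_{ijk} = 1` (fixed `j`). -/
def planeCoeffMatrix (n : ℕ) :
    Matrix (Fin 3 × Fin n) (Fin n × Fin n × Fin n) ℝ :=
  fun r c =>
    if (r.1 = 0 ∧ c.2.2 = r.2) ∨
       (r.1 = 1 ∧ c.1 = r.2) ∨
       (r.1 = 2 ∧ c.2.1 = r.2) then 1 else 0

open Matrix

lemma vecMul_planeCoeffMatrix_apply (n : ℕ) (x : Fin 3 × Fin n → ℝ)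
    (c : Fin n × Fin n × Fin n) :
    (x ᵥ* planeCoeffMatrix n) c = x (0, c.2.2) + x (1, c.1) + x (2, c.2.1) := by
  simp only [vecMul, dotProduct, planeCoeffMatrix, mul_ite, mul_one, mul_zero]
  rw [Fintype.sum_prod_type, Fin.sum_univ_three]
  simp [Finset.sum_ite_eq]

def familyConstants (n : ℕ) : (ℝ × ℝ) →ₗ[ℝ] (Fin 3 × Fin n → ℝ) where
  toFun p r := ![p.1, p.2, -p.1 - p.2] r.1
  map_add' p q := by
    funext ⟨t, _⟩
    fin_cases t <;> simp [add_add_add_comm, sub_eq_add_neg, add_comm]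
  map_smul' m p := by
    funext ⟨t, _⟩
    fin_cases t <;> simp [mul_sub]

lemma ker_vecMulLinear_planeCoeffMatrix (n : ℕ) [NeZero n] :
    LinearMap.ker (planeCoeffMatrix n).vecMulLinear = LinearMap.range (familyConstants n) := by
  ext x
  simp only [LinearMap.mem_ker, LinearMap.mem_range]
  constructor
  · intro hx
    have hsum (i j k : Fin n) : x (0, k) + x (1, i) + x (2, j) = 0 := by
      simpa only [vecMulLinear_apply, vecMul_planeCoeffMatrix_apply, Pi.zero_apply]
        using congrFun hx (i, j, k)
    refine ⟨(x (0, 0), x (1, 0)), funext fun ⟨t, m⟩ => ?_⟩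
    have hsum₀ := hsum 0 0 0
    fin_cases t
    · show x (0, 0) = x (0, m); linarith [hsum 0 0 m]
    · show x (1, 0) = x (1, m); linarith [hsum m 0 0]
    · show -x (0, 0) - x (1, 0) = x (2, m); linarith [hsum 0 m 0]
  · rintro ⟨⟨a, b⟩, rfl⟩
    funext c
    rw [vecMulLinear_apply, vecMul_planeCoeffMatrix_apply]
    show a + b + (-a - b) = 0
    ring

lemma familyConstants_injective (n : ℕ) [NeZero n] : Function.Injective (familyConstants n) := by
  rw [injective_iff_map_eq_zero]
  rintro ⟨a, b⟩ h
  have ha : a = 0 := congrFun h (0, 0)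
  have hb : b = 0 := congrFun h (1, 0)
  rw [ha, hb, Prod.mk_zero_zero]

lemma finrank_ker_vecMulLinear_planeCoeffMatrix (n : ℕ) [NeZero n] :
    Module.finrank ℝ (LinearMap.ker (planeCoeffMatrix n).vecMulLinear) = 2 := by
  rw [ker_vecMulLinear_planeCoeffMatrix,
    LinearMap.finrank_range_of_inj (familyConstants_injective n), Module.finrank_prod,
    Module.finrank_self]

theorem stmt_13_general (n : ℕ) :
    (planeCoeffMatrix n).rank = 3 * n - 2 := by
  rcases Nat.eq_zero_or_pos n with rfl | hn
  · -- no rows, and `3 * 0 - 2 = 0` by truncated subtraction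
    exact Nat.le_zero.mp ((rank_le_card_height _).trans_eq (by simp))
  have : NeZero n := ⟨hn.ne'⟩
  have hrank_nullity := LinearMap.finrank_range_add_finrank_ker (planeCoeffMatrix n).vecMulLinear
  simp only [finrank_ker_vecMulLinear_planeCoeffMatrix, Module.finrank_fintype_fun_eq_card,
    Fintype.card_prod, Fintype.card_fin] at hrank_nullity
  rw [← rank_transpose, Matrix.rank, mulVecLin_transpose]
  omega

theorem stmt_13 (n : ℕ) (hn : 0 < n) :
    (planeCoeffMatrix n).rank = 3 * n - 2 :=
  stmt_13_general n
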